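/- arXiv:2509.05036 — 5 statements merged into one kernel-verified Lean document; each statement's English description precedes it below -/
import Mathlib

section
/- Standard embezzlement implies no-input embezzlement (Proposition 2.1, forward direction). Let H be a complex Hilbert space, let ψ ∈ ℂ² ⊗ ℂ² and ψ_c ∈ H be unit vectors, and let U_A, U_B be unitaries on H ⊗ ℂ². Regard them as unitaries Ū_A, Ū_B on H ⊗ ℂ² ⊗ ℂ², where Ū_A applies U_A to H and the first qubit factor (acting as the identity on the second qubit) and Ū_B applies U_B to H and the second qubit factor (acting as the identity on the first qubit). Assume Ū_A Ū_B = Ū_B Ū_A and Ū_A Ū_B (ψ_c ⊗ |00⟩) = ψ_c ⊗ ψ. Then, with catalyst space H' := H ⊗ ℂ^∞ ⊗ ℂ^∞ and catalyst vector φ_c := ψ_c ⊗ Ω ⊗ Ω, there exist linear isometries V_A, V_B : H' → H' ⊗ ℂ² such that (V_A ⊗ 1₂)(V_B φ_c) = φ_c ⊗ ψ, where the two output qubit factors are ordered so that the qubit produced by V_A comes first, and such that (V_A ⊗ 1₂) V_B = S ∘ (V_B ⊗ 1₂) V_A, where S is the unitary on H' ⊗ ℂ² ⊗ ℂ² swapping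 the two qubit factors. -/
noncomputable section

variable {K : Type*} [NormedAddCommGroup K] [InnerProductSpace ℂ K]

/-- `K ⊗ ℂ²`, realized concretely as the Hilbert space of `K`-valued families indexed by the
qubit basis `{|0⟩, |1⟩}`. -/
abbrev QTensor (K : Type*) [NormedAddCommGroup K] [InnerProductSpace ℂ K] :=
  PiLp 2 (fun _ : Fin 2 => K)

/-- `K ⊗ ℂ² ⊗ ℂ²`, realized concretely and indexed by pairs `(i, j)`, where `i` labels the basis
of the first qubit factor and `j` that of the second. -/
abbrev QQTensor (K : Type*) [NormedAddCommGroup K] [InnerProductSpace ℂ K] :=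
  PiLp 2 (fun _ : Fin 2 × Fin 2 => K)

/-- The elementary tensor `h ⊗ v` of a vector `h : K` with a two-qubit vector
`v ∈ ℂ² ⊗ ℂ²`, as an element of `K ⊗ ℂ² ⊗ ℂ²`. -/
def vecTensor (h : K) (v : EuclideanSpace ℂ (Fin 2 × Fin 2)) : QQTensor K :=
  WithLp.toLp 2 (fun p => v p • h)

/-- The qubit basis state `|0⟩ ∈ ℂ²`. -/
def ket0 : EuclideanSpace ℂ (Fin 2) := EuclideanSpace.single 0 1

/-- The elementary tensor `u ⊗ v ∈ ℂ² ⊗ ℂ²` of two qubit states. -/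
def qubitTensor (u v : EuclideanSpace ℂ (Fin 2)) : EuclideanSpace ℂ (Fin 2 × Fin 2) :=
  WithLp.toLp 2 (fun p : Fin 2 × Fin 2 => u p.1 * v p.2)

/-- The state `|00⟩ = |0⟩ ⊗ |0⟩ ∈ ℂ² ⊗ ℂ²`. -/
def ket00 : EuclideanSpace ℂ (Fin 2 × Fin 2) := qubitTensor ket0 ket0

/-- The amplification `U ⊗ 1₂` of a linear isometry `U` of `K ⊗ ℂ²`, acting on `K` and the
*first* qubit factor of `K ⊗ ℂ² ⊗ ℂ²` and as the identity on the second qubit factor. -/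
def ampFirst (U : QTensor K →ₗᵢ[ℂ] QTensor K) : QQTensor K →ₗᵢ[ℂ] QQTensor K :=
  LinearMap.isometryOfInner
    { toFun := fun x => WithLp.toLp 2 (fun p : Fin 2 × Fin 2 =>
        U (WithLp.toLp 2 (fun i' => x (i', p.2))) p.1)
      map_add' := fun x y => by
        ext p
        have : (WithLp.toLp 2 (fun i' => (x + y) (i', p.2)) : QTensor K) =
            WithLp.toLp 2 (fun i' => x (i', p.2)) + WithLp.toLp 2 (fun i' => y (i', p.2)) := rfl
        simp only [this, map_add]
        rfl
      map_smul' := fun c x => by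
        ext p
        have : (WithLp.toLp 2 (fun i' => (c • x) (i', p.2)) : QTensor K) =
            c • WithLp.toLp 2 (fun i' => x (i', p.2)) := rfl
        simp only [this, map_smul]
        rfl }
    (by
      intro x y
      simp only [PiLp.inner_apply, LinearMap.coe_mk, AddHom.coe_mk, PiLp.toLp_apply]
      have key : ∀ j : Fin 2,
          (∑ i : Fin 2, (inner ℂ (U (WithLp.toLp 2 (fun i' => x (i', j))) i)
              (U (WithLp.toLp 2 (fun i' => y (i', j))) i) : ℂ))
            = ∑ i : Fin 2, (inner ℂ (x (i, j)) (y (i, j)) : ℂ) := by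
        intro j
        have h := U.inner_map_map (WithLp.toLp 2 (fun i' => x (i', j)))
          (WithLp.toLp 2 (fun i' => y (i', j)))
        rw [PiLp.inner_apply, PiLp.inner_apply] at h
        simpa only [PiLp.toLp_apply, WithLp.ofLp_toLp] using h
      simp only [Fintype.sum_prod_type]
      rw [Finset.sum_comm]
      conv_rhs => rw [Finset.sum_comm]
      exact Finset.sum_congr rfl fun j _ => key j)

/-- The amplification `U ⊗ 1₂` of a linear isometry `U` of `K ⊗ ℂ²`, acting on `K` and the
*second* qubit factor of `K ⊗ ℂ² ⊗ ℂ²` and as the identity on the first qubit factor. -/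
def ampSecond (U : QTensor K →ₗᵢ[ℂ] QTensor K) : QQTensor K →ₗᵢ[ℂ] QQTensor K :=
  LinearMap.isometryOfInner
    { toFun := fun x => WithLp.toLp 2 (fun p : Fin 2 × Fin 2 =>
        U (WithLp.toLp 2 (fun j' => x (p.1, j'))) p.2)
      map_add' := fun x y => by
        ext p
        have : (WithLp.toLp 2 (fun j' => (x + y) (p.1, j')) : QTensor K) =
            WithLp.toLp 2 (fun j' => x (p.1, j')) + WithLp.toLp 2 (fun j' => y (p.1, j')) := rfl
        simp only [this, map_add]
        rfl
      map_smul' := fun c x => by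
        ext p
        have : (WithLp.toLp 2 (fun j' => (c • x) (p.1, j')) : QTensor K) =
            c • WithLp.toLp 2 (fun j' => x (p.1, j')) := rfl
        simp only [this, map_smul]
        rfl }
    (by
      intro x y
      simp only [PiLp.inner_apply, LinearMap.coe_mk, AddHom.coe_mk, PiLp.toLp_apply]
      have key : ∀ i : Fin 2,
          (∑ j : Fin 2, (inner ℂ (U (WithLp.toLp 2 (fun j' => x (i, j'))) j)
              (U (WithLp.toLp 2 (fun j' => y (i, j'))) j) : ℂ))
            = ∑ j : Fin 2, (inner ℂ (x (i, j)) (y (i, j)) : ℂ) := by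
        intro i
        have h := U.inner_map_map (WithLp.toLp 2 (fun j' => x (i, j')))
          (WithLp.toLp 2 (fun j' => y (i, j')))
        rw [PiLp.inner_apply, PiLp.inner_apply] at h
        simpa only [PiLp.toLp_apply, WithLp.ofLp_toLp] using h
      simp only [Fintype.sum_prod_type]
      exact Finset.sum_congr rfl fun i _ => key i)

/-- The amplification `V ⊗ 1₂` of a linear isometry `V : K → K ⊗ ℂ²`, acting on the `K` factor
of `K ⊗ ℂ²` and as the identity on the existing qubit.  The *new* qubit produced by `V` is
placed first, the existing qubit second. -/
def ampNew (V : K →ₗᵢ[ℂ] QTensor K) : QTensor K →ₗᵢ[ℂ] QQTensor K :=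
  LinearMap.isometryOfInner
    { toFun := fun x => WithLp.toLp 2 (fun p : Fin 2 × Fin 2 => V (x p.2) p.1)
      map_add' := fun x y => by
        ext p
        have : (x + y) p.2 = x p.2 + y p.2 := rfl
        simp only [this, map_add]
        rfl
      map_smul' := fun c x => by
        ext p
        have : (c • x) p.2 = c • x p.2 := rfl
        simp only [this, map_smul]
        rfl }
    (by
      intro x y
      simp only [PiLp.inner_apply, LinearMap.coe_mk, AddHom.coe_mk, PiLp.toLp_apply]
      have key : ∀ j : Fin 2,
          (∑ i : Fin 2, (inner ℂ (V (x j) i) (V (y j) i) : ℂ)) = inner ℂ (x j) (y j) := by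
        intro j
        have h := V.inner_map_map (x j) (y j)
        rw [PiLp.inner_apply] at h
        exact h
      simp only [Fintype.sum_prod_type]
      rw [Finset.sum_comm]
      exact Finset.sum_congr rfl fun j _ => key j)

/-- The unitary `S` on `K ⊗ ℂ² ⊗ ℂ²` swapping the two qubit factors. -/
def swapQubits : QQTensor K ≃ₗᵢ[ℂ] QQTensor K :=
  LinearIsometryEquiv.piLpCongrLeft 2 ℂ K (Equiv.prodComm (Fin 2) (Fin 2))

/-- The index set of the standard orthonormal basis of the Guichardet infinite tensor product
`ℂ^∞ = ⊗_{n ∈ ℕ} (ℂ², |0⟩)`: finitely supported sequences `s : ℕ → {0, 1}`. -/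
abbrev GuichardetIndex : Type := ℕ →₀ Fin 2

/-- The catalyst space `H ⊗ ℂ^∞ ⊗ ℂ^∞`, realized concretely as the `ℓ²`-space of `H`-valued
families indexed by pairs of finitely supported binary sequences. -/
abbrev CatalystSpace (H : Type*) [NormedAddCommGroup H] [InnerProductSpace ℂ H] :=
  lp (fun _ : GuichardetIndex × GuichardetIndex => H) 2

/-- The catalyst vector `h ⊗ Ω ⊗ Ω ∈ H ⊗ ℂ^∞ ⊗ ℂ^∞`, where `Ω` is the reference vector of
`ℂ^∞` (the basis vector at the all-zero sequence). -/
def catalystVec {H : Type*} [NormedAddCommGroup H] [InnerProductSpace ℂ H] (h : H) :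
    CatalystSpace H :=
  lp.single 2 (0, 0) h





namespace Embez

abbrev G := GuichardetIndex

def gtail (s : G) : G := Finsupp.comapDomain Nat.succ s (Nat.succ_injective.injOn)

@[simp] lemma gtail_apply (s : G) (n : ℕ) : gtail s n = s (n + 1) := rfl

def gcons (i : Fin 2) (s : G) : G :=
  Finsupp.single 0 i + s.embDomain ⟨Nat.succ, Nat.succ_injective⟩

@[simp] lemma gcons_apply_zero (i : Fin 2) (s : G) : gcons i s 0 = i := by
  have h0 : Finsupp.embDomain (⟨Nat.succ, Nat.succ_injective⟩ : ℕ ↪ ℕ) s 0 = 0 :=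
    Finsupp.embDomain_notin_range _ _ _ (by rintro ⟨n, hn⟩; exact Nat.succ_ne_zero n hn)
  rw [gcons, Finsupp.add_apply, h0]
  simp

@[simp] lemma gcons_apply_succ (i : Fin 2) (s : G) (n : ℕ) : gcons i s (n + 1) = s n := by
  simp [gcons, Finsupp.add_apply, Finsupp.single_apply, -Finsupp.embDomain_apply]
  have : ((⟨Nat.succ, Nat.succ_injective⟩ : ℕ ↪ ℕ) n) = n + 1 := rfl
  rw [← this, Finsupp.embDomain_apply_self]

def consEquiv : Fin 2 × G ≃ G where
  toFun p := gcons p.1 p.2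
  invFun s := (s 0, gtail s)
  left_inv := by
    rintro ⟨i, s⟩
    refine Prod.ext (by simp) (Finsupp.ext fun n => ?_)
    simp
  right_inv := by
    intro s
    refine Finsupp.ext fun n => ?_
    cases n with
    | zero => simp
    | succ n => simp

@[simp] lemma gcons_eq_zero_iff (i : Fin 2) (s : G) : gcons i s = 0 ↔ i = 0 ∧ s = 0 := by
  constructor
  · intro h
    have h0 : gcons i s 0 = (0 : G) 0 := by rw [h]
    have ht : ∀ n, gcons i s (n+1) = (0 : G) (n+1) := fun n => by rw [h]
    refine ⟨by simpa using h0, Finsupp.ext fun n => by simpa using ht n⟩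
  · rintro ⟨rfl, rfl⟩
    exact Finsupp.ext fun n => by cases n <;> simp

end Embez

namespace Embez
open scoped ENNReal

def eA : Fin 2 × (G × G) ≃ G × G where
  toFun p := (consEquiv (p.1, p.2.1), p.2.2)
  invFun q := ((consEquiv.symm q.1).1, ((consEquiv.symm q.1).2, q.2))
  left_inv := by rintro ⟨i, s, t⟩; simp
  right_inv := by rintro ⟨s, t⟩; simp

def eB : Fin 2 × (G × G) ≃ G × G where
  toFun p := (p.2.1, consEquiv (p.1, p.2.2))
  invFun q := ((consEquiv.symm q.2).1, (q.1, (consEquiv.symm q.2).2))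
  left_inv := by rintro ⟨i, s, t⟩; simp
  right_inv := by rintro ⟨s, t⟩; simp

@[simp] lemma eA_apply (i : Fin 2) (s t : G) : eA (i, (s, t)) = (gcons i s, t) := rfl
@[simp] lemma eB_apply (i : Fin 2) (s t : G) : eB (i, (s, t)) = (s, gcons i t) := rfl

variable {H : Type*} [NormedAddCommGroup H] [InnerProductSpace ℂ H]

lemma summable_sq (x : CatalystSpace H) :
    Summable fun q : G × G => ‖x q‖ ^ (2 : ℝ≥0∞).toReal :=
  (memℓp_gen_iff (by norm_num)).1 (lp.memℓp x)

def pullFun (e : Fin 2 × (G × G) ≃ G × G) (U : QTensor H ≃ₗᵢ[ℂ] QTensor H)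
    (x : CatalystSpace H) (i : Fin 2) : ∀ _ : G × G, H :=
  fun q => U (WithLp.toLp 2 (fun i' => x (e (i', q)))) i

lemma injective_mk (e : Fin 2 × (G × G) ≃ G × G) (i : Fin 2) :
    Function.Injective (fun q : G × G => e (i, q)) := by
  intro a b hab
  exact (Prod.ext_iff.1 (e.injective hab)).2

lemma memℓp_pullFun (e : Fin 2 × (G × G) ≃ G × G) (U : QTensor H ≃ₗᵢ[ℂ] QTensor H)
    (x : CatalystSpace H) (i : Fin 2) : Memℓp (pullFun e U x i) 2 := by
  apply memℓp_gen
  have hterm : ∀ i' : Fin 2,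
      Summable fun q : G × G => ‖x (e (i', q))‖ ^ (2 : ℝ≥0∞).toReal := fun i' =>
    (summable_sq x).comp_injective (injective_mk e i')
  refine Summable.of_nonneg_of_le (fun q => ?_) (fun q => ?_) ((hterm 0).add (hterm 1))
  · positivity
  · have h2 : ∀ r : ℝ, r ^ (2 : ℝ≥0∞).toReal = r ^ 2 := fun r => by
      rw [show (2 : ℝ≥0∞).toReal = (2 : ℝ) by norm_num, Real.rpow_two]
    rw [h2, h2, h2]
    set v : QTensor H := WithLp.toLp 2 (fun i' => x (e (i', q))) with hv
    calc ‖pullFun e U x i q‖ ^ 2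
        ≤ ∑ j, ‖U v j‖ ^ 2 :=
          Finset.single_le_sum (f := fun j => ‖U v j‖ ^ 2)
            (fun j _ => sq_nonneg _) (Finset.mem_univ i)
      _ = ‖U v‖ ^ 2 := (PiLp.norm_sq_eq_of_L2 _ _).symm
      _ = ‖v‖ ^ 2 := by rw [U.norm_map]
      _ = ∑ i', ‖v i'‖ ^ 2 := PiLp.norm_sq_eq_of_L2 _ _
      _ = ‖x (e (0, q))‖ ^ 2 + ‖x (e (1, q))‖ ^ 2 := by
          rw [Fin.sum_univ_two]

def pullLinear (e : Fin 2 × (G × G) ≃ G × G) (U : QTensor H ≃ₗᵢ[ℂ] QTensor H) :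
    CatalystSpace H →ₗ[ℂ] QTensor (CatalystSpace H) where
  toFun x := WithLp.toLp 2 (fun i => ⟨pullFun e U x i, memℓp_pullFun e U x i⟩)
  map_add' x y := by
    refine PiLp.ext fun i => ?_
    apply lp.ext
    funext q
    have hx : (WithLp.toLp 2 (fun i' => (x + y) (e (i', q))) : QTensor H)
        = WithLp.toLp 2 (fun i' => x (e (i', q))) + WithLp.toLp 2 (fun i' => y (e (i', q))) := by
      refine PiLp.ext fun i' => ?_; simp [lp.coeFn_add]
    show pullFun e U (x + y) i q = pullFun e U x i q + pullFun e U y i q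
    simp only [pullFun, hx, map_add]
    rfl
  map_smul' c x := by
    refine PiLp.ext fun i => ?_
    apply lp.ext
    funext q
    have hx : (WithLp.toLp 2 (fun i' => (c • x) (e (i', q))) : QTensor H)
        = c • WithLp.toLp 2 (fun i' => x (e (i', q))) := by
      refine PiLp.ext fun i' => ?_; simp [lp.coeFn_smul]
    show pullFun e U (c • x) i q = c • pullFun e U x i q
    simp only [pullFun, hx, map_smul]
    rfl

lemma pullLinear_apply_coe (e : Fin 2 × (G × G) ≃ G × G) (U : QTensor H ≃ₗᵢ[ℂ] QTensor H)
    (x : CatalystSpace H) (i : Fin 2) (q : G × G) :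
    (pullLinear e U x i : ∀ _ : G × G, H) q = U (WithLp.toLp 2 (fun i' => x (e (i', q)))) i := rfl

lemma pullLinear_inner (e : Fin 2 × (G × G) ≃ G × G) (U : QTensor H ≃ₗᵢ[ℂ] QTensor H)
    (x y : CatalystSpace H) :
    (inner ℂ (pullLinear e U x) (pullLinear e U y) : ℂ) = inner ℂ x y := by
  classical
  have hxy : Summable fun p : G × G => (inner ℂ (x p) (y p) : ℂ) := lp.summable_inner x y
  have hre : Summable fun r : Fin 2 × (G × G) => (inner ℂ (x (e r)) (y (e r)) : ℂ) :=
    hxy.comp_injective e.injective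
  have hA : ∀ i : Fin 2, Summable fun q : G × G =>
      (inner ℂ (U (WithLp.toLp 2 (fun i' => x (e (i', q)))) i) (U (WithLp.toLp 2 (fun i' => y (e (i', q)))) i) : ℂ) := by
    intro i
    exact lp.summable_inner (pullLinear e U x i) (pullLinear e U y i)
  calc (inner ℂ (pullLinear e U x) (pullLinear e U y) : ℂ)
      = ∑ i : Fin 2, (inner ℂ ((pullLinear e U x) i) ((pullLinear e U y) i) : ℂ) :=
        PiLp.inner_apply _ _
    _ = ∑ i : Fin 2, ∑' q : G × G,
          (inner ℂ (U (WithLp.toLp 2 (fun i' => x (e (i', q)))) i) (U (WithLp.toLp 2 (fun i' => y (e (i', q)))) i) : ℂ) := by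
        refine Finset.sum_congr rfl fun i _ => ?_
        exact lp.inner_eq_tsum _ _
    _ = ∑' q : G × G, ∑ i : Fin 2,
          (inner ℂ (U (WithLp.toLp 2 (fun i' => x (e (i', q)))) i) (U (WithLp.toLp 2 (fun i' => y (e (i', q)))) i) : ℂ) :=
        (Summable.tsum_finsetSum fun i _ => hA i).symm
    _ = ∑' q : G × G, ∑ i : Fin 2, (inner ℂ (x (e (i, q))) (y (e (i, q))) : ℂ) := by
        refine tsum_congr fun q => ?_
        have h := U.inner_map_map
          (WithLp.toLp 2 (fun i' => x (e (i', q)))) (WithLp.toLp 2 (fun i' => y (e (i', q))))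
        rw [PiLp.inner_apply, PiLp.inner_apply] at h
        exact h
    _ = ∑ i : Fin 2, ∑' q : G × G, (inner ℂ (x (e (i, q))) (y (e (i, q))) : ℂ) :=
        Summable.tsum_finsetSum fun i _ => hre.prod_factor i
    _ = ∑' i : Fin 2, ∑' q : G × G, (inner ℂ (x (e (i, q))) (y (e (i, q))) : ℂ) :=
        (tsum_fintype _).symm
    _ = ∑' r : Fin 2 × (G × G), (inner ℂ (x (e r)) (y (e r)) : ℂ) := (Summable.tsum_prod hre).symm
    _ = ∑' p : G × G, (inner ℂ (x p) (y p) : ℂ) := e.tsum_eq fun p => (inner ℂ (x p) (y p) : ℂ)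
    _ = inner ℂ x y := (lp.inner_eq_tsum _ _).symm

def pullIso (e : Fin 2 × (G × G) ≃ G × G) (U : QTensor H ≃ₗᵢ[ℂ] QTensor H) :
    CatalystSpace H →ₗᵢ[ℂ] QTensor (CatalystSpace H) :=
  (pullLinear e U).isometryOfInner (pullLinear_inner e U)

lemma pullIso_apply_coe (e : Fin 2 × (G × G) ≃ G × G) (U : QTensor H ≃ₗᵢ[ℂ] QTensor H)
    (x : CatalystSpace H) (i : Fin 2) (q : G × G) :
    (pullIso e U x i : ∀ _ : G × G, H) q = U (WithLp.toLp 2 (fun i' => x (e (i', q)))) i := rfl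

end Embez
/-- **Standard embezzlement implies no-input embezzlement** (forward direction of
Proposition 2.1).  If unitaries `U_A, U_B` on `H ⊗ ℂ²` have commuting amplifications
`Ū_A, Ū_B` on `H ⊗ ℂ² ⊗ ℂ²` (acting on the first resp. second qubit) with
`Ū_A Ū_B (ψ_c ⊗ |00⟩) = ψ_c ⊗ ψ`, then with catalyst space `H' = H ⊗ ℂ^∞ ⊗ ℂ^∞` and
catalyst vector `φ_c = ψ_c ⊗ Ω ⊗ Ω` there are linear isometries
`V_A, V_B : H' → H' ⊗ ℂ²` with `(V_A ⊗ 1₂)(V_B φ_c) = φ_c ⊗ ψ` (the qubit produced by `V_A`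
coming first) and `(V_A ⊗ 1₂) V_B = S ∘ (V_B ⊗ 1₂) V_A`, where `S` swaps the two qubits. -/
theorem standard_to_no_input_embezzlement
    {H : Type*} [NormedAddCommGroup H] [InnerProductSpace ℂ H]
    (ψ : EuclideanSpace ℂ (Fin 2 × Fin 2)) (hψ : ‖ψ‖ = 1)
    (ψc : H) (hψc : ‖ψc‖ = 1)
    (UA UB : QTensor H ≃ₗᵢ[ℂ] QTensor H)
    (hUcomm : ∀ x : QQTensor H,
      ampFirst UA.toLinearIsometry (ampSecond UB.toLinearIsometry x)
        = ampSecond UB.toLinearIsometry (ampFirst UA.toLinearIsometry x))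
    (hUemb : ampFirst UA.toLinearIsometry
        (ampSecond UB.toLinearIsometry (vecTensor ψc ket00)) = vecTensor ψc ψ) :
    ∃ VA VB : CatalystSpace H →ₗᵢ[ℂ] QTensor (CatalystSpace H),
      ampNew VA (VB (catalystVec ψc)) = vecTensor (catalystVec ψc) ψ ∧
      ∀ x : CatalystSpace H, ampNew VA (VB x) = swapQubits (ampNew VB (VA x)) := by
  classical
  refine ⟨Embez.pullIso Embez.eA UA, Embez.pullIso Embez.eB UB, ?_, ?_⟩
  · refine PiLp.ext fun p => ?_
    apply lp.ext
    funext q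
    obtain ⟨s, t⟩ := q
    by_cases hst : s = 0 ∧ t = 0
    · obtain ⟨rfl, rfl⟩ := hst
      have hy : (WithLp.toLp 2 (fun r : Fin 2 × Fin 2 =>
          (catalystVec ψc) (Embez.gcons r.1 0, Embez.gcons r.2 0)) : QQTensor H)
          = vecTensor ψc ket00 := by
        refine PiLp.ext fun r => ?_
        obtain ⟨i, j⟩ := r
        fin_cases i <;> fin_cases j <;>
          simp [catalystVec, lp.single_apply, vecTensor, ket00, qubitTensor, ket0,
            EuclideanSpace.single_apply, Prod.ext_iff, Embez.gcons_eq_zero_iff, Pi.single_apply]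
      show ampFirst UA.toLinearIsometry (ampSecond UB.toLinearIsometry
          (WithLp.toLp 2 (fun r : Fin 2 × Fin 2 =>
            (catalystVec ψc) (Embez.gcons r.1 0, Embez.gcons r.2 0)) : QQTensor H)) p
        = (vecTensor (catalystVec ψc) ψ p : ∀ _ : Embez.G × Embez.G, H) ((0 : Embez.G), (0 : Embez.G))
      rw [hy, hUemb]
      show ψ p • ψc = (ψ p • catalystVec ψc : CatalystSpace H) ((0 : Embez.G), (0 : Embez.G))
      rw [lp.coeFn_smul, Pi.smul_apply]
      congr 1
    · have hz : ∀ i' : Fin 2,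
          (WithLp.toLp 2 (fun j' : Fin 2 => (catalystVec ψc) (Embez.gcons i' s, Embez.gcons j' t)) : QTensor H)
            = (0 : QTensor H) := by
        intro i'
        refine PiLp.ext fun j' => ?_
        have hne : ((Embez.gcons i' s, Embez.gcons j' t) : Embez.G × Embez.G)
            ≠ ((0 : Embez.G), (0 : Embez.G)) := by
          intro h
          rw [Prod.ext_iff] at h
          exact hst ⟨((Embez.gcons_eq_zero_iff _ _).1 h.1).2,
            ((Embez.gcons_eq_zero_iff _ _).1 h.2).2⟩
        exact lp.single_apply_ne (E := fun _ : Embez.G × Embez.G => H) 2 _ ψc hne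
      have hfun : (WithLp.toLp 2 (fun i' : Fin 2 => UB (WithLp.toLp 2 (fun j' : Fin 2 =>
          (catalystVec ψc) (Embez.gcons i' s, Embez.gcons j' t))) p.2) : QTensor H) = (0 : QTensor H) := by
        refine PiLp.ext fun i' => ?_
        change (UB (WithLp.toLp 2 (fun j' : Fin 2 =>
          (catalystVec ψc) (Embez.gcons i' s, Embez.gcons j' t)))) p.2 = (0 : QTensor H) i'
        rw [hz i', map_zero]
        rfl
      show UA (WithLp.toLp 2 (fun i' : Fin 2 => UB (WithLp.toLp 2 (fun j' : Fin 2 =>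
          (catalystVec ψc) (Embez.gcons i' s, Embez.gcons j' t))) p.2)) p.1
        = (vecTensor (catalystVec ψc) ψ p : ∀ _ : Embez.G × Embez.G, H) (s, t)
      rw [hfun, map_zero]
      show (0 : H) = (ψ p • catalystVec ψc : CatalystSpace H) (s, t)
      rw [lp.coeFn_smul, Pi.smul_apply]
      rw [show (catalystVec ψc : ∀ _ : Embez.G × Embez.G, H) (s, t) = 0 from
        lp.single_apply_ne (E := fun _ : Embez.G × Embez.G => H) 2 _ ψc
          (by intro h; rw [Prod.ext_iff] at h; exact hst ⟨h.1, h.2⟩)]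
      simp
  · intro x
    refine PiLp.ext fun p => ?_
    apply lp.ext
    funext q
    obtain ⟨s, t⟩ := q
    have h := hUcomm (WithLp.toLp 2 (fun r : Fin 2 × Fin 2 => x (Embez.gcons r.1 s, Embez.gcons r.2 t)))
    exact congrArg (fun z : QQTensor H => z p) h

end
end

section
/- Exact embezzlement implies local containment of infinitely many copies of the target state (Theorem 3.6, algebraic form). Let A_f, B_f, A_g, B_g be unital complex star algebras, let Φ_A : A_f ⊗ A_g → A_f and Φ_B : B_f ⊗ B_g → B_f be star-algebra isomorphisms, and let Φ : A_f ⊗ B_f ⊗ A_g ⊗ B_g → A_f ⊗ B_f denote the composition (Φ_A ⊗ Φ_B) ∘ σ, where σ : A_f ⊗ B_f ⊗ A_g ⊗ B_g ≅ (A_f ⊗ A_g) ⊗ (B_f ⊗ B_g) is the canonical reordering isomorphism. Let f be a unital linear functional on A_f ⊗ B_f and g a unital linear functional on A_g ⊗ B_g such that f ∘ Φ = f ⊗ g. Then there exist sequences (π_A^(n))_{n≥1} of injective star-algebra homomorphisms A_g → A_f and (π_B^(n))_{n≥1} of injective star-algebra homomorphisms B_g → B_f such that: (i) for all m ≠ n,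 every element of the image of π_A^(m) commutes with every element of the image of π_A^(n), and every element of the image of π_B^(m) commutes with every element of the image of π_B^(n); and (ii) for every n and every P ∈ A_g ⊗ B_g, f((π_A^(n) ⊗ π_B^(n))(P)) = g(P). -/
open TensorProduct

section StarTensor

variable {A B : Type*} [Ring A] [Ring B] [Algebra ℂ A] [Algebra ℂ B]
  [StarRing A] [StarRing B] [StarModule ℂ A] [StarModule ℂ B]

/-- The star operation on the algebraic tensor product, determined by
`(a ⊗ b)* = a* ⊗ b*`. -/
noncomputable def tensorStar : A ⊗[ℂ] B →+ A ⊗[ℂ] B :=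
  TensorProduct.liftAddHom
    { toFun := fun a =>
        { toFun := fun b => star a ⊗ₜ[ℂ] star b
          map_zero' := by simp
          map_add' := fun b b' => by simp [star_add, TensorProduct.tmul_add] }
      map_zero' := by ext b; simp
      map_add' := fun a a' => by ext b; simp [star_add, TensorProduct.add_tmul] }
    (fun c a b => by
      simp [star_smul, TensorProduct.smul_tmul', TensorProduct.tmul_smul])

@[simp] lemma tensorStar_tmul (a : A) (b : B) :
    tensorStar (a ⊗ₜ[ℂ] b) = star a ⊗ₜ[ℂ] star b := by
  simp [tensorStar]

lemma tensorStar_involutive : ∀ x : A ⊗[ℂ] B, tensorStar (tensorStar x) = x := fun x => by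
  induction x with
  | zero => simp
  | tmul a b => simp
  | add x y hx hy => simp only [map_add, hx, hy]

lemma tensorStar_mul : ∀ x y : A ⊗[ℂ] B, tensorStar (x * y) = tensorStar y * tensorStar x := by
  intro x y
  induction x with
  | zero => simp
  | tmul a b =>
      induction y with
      | zero => simp
      | tmul c d => simp [Algebra.TensorProduct.tmul_mul_tmul]
      | add y z hy hz => simp only [add_mul, mul_add, map_add, hy, hz]
  | add x x' hx hx' => simp only [add_mul, mul_add, map_add, hx, hx']

noncomputable instance TensorProduct.instStarRingTensorStar : StarRing (A ⊗[ℂ] B) where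
  star := tensorStar
  star_involutive := tensorStar_involutive
  star_mul := tensorStar_mul
  star_add := map_add tensorStar

noncomputable instance TensorProduct.instStarModuleTensorStar : StarModule ℂ (A ⊗[ℂ] B) where
  star_smul := fun c x => by
    show tensorStar (c • x) = star c • tensorStar x
    induction x with
    | zero => simp
    | tmul a b => simp [TensorProduct.smul_tmul', star_smul]
    | add x y hx hy => simp only [smul_add, map_add, hx, hy]

@[simp] lemma TensorProduct.star_tmul_tensorStar (a : A) (b : B) :
    star (a ⊗ₜ[ℂ] b) = star a ⊗ₜ[ℂ] star b :=
  tensorStar_tmul a b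

end StarTensor

/-- The tensor product `f ⊗ g` of two linear functionals, acting by
`(f ⊗ g)(a ⊗ b) = f a * g b`. -/
noncomputable def tensorFun {A B : Type*} [AddCommMonoid A] [AddCommMonoid B]
    [Module ℂ A] [Module ℂ B] (f : A →ₗ[ℂ] ℂ) (g : B →ₗ[ℂ] ℂ) :
    A ⊗[ℂ] B →ₗ[ℂ] ℂ :=
  (TensorProduct.lid ℂ ℂ).toLinearMap ∘ₗ TensorProduct.map f g

@[simp] lemma tensorFun_tmul {A B : Type*} [AddCommMonoid A] [AddCommMonoid B]
    [Module ℂ A] [Module ℂ B] (f : A →ₗ[ℂ] ℂ) (g : B →ₗ[ℂ] ℂ) (a : A) (b : B) :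
    tensorFun f g (a ⊗ₜ[ℂ] b) = f a * g b := by
  simp [tensorFun]


section Aux

variable {V : Type*} [AddCommGroup V] [Module ℂ V]

/-- Over a field, every nonzero vector admits a dual functional taking value `1` on it. -/
lemma exists_dual_one {v : V} (hv : v ≠ 0) : ∃ φ : V →ₗ[ℂ] ℂ, φ v = 1 := by
  obtain ⟨φ, hφ⟩ := (LinearMap.toSpanSingleton ℂ V v).exists_leftInverse_of_injective
    (LinearMap.ker_toSpanSingleton ℂ hv)
  refine ⟨φ, ?_⟩
  have := LinearMap.congr_fun hφ 1
  simpa [LinearMap.toSpanSingleton_apply] using this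

variable {W : Type*} [AddCommGroup W] [Module ℂ W]

lemma tmul_right_injective {w : W} (φ : W →ₗ[ℂ] ℂ) (hφ : φ w = 1) :
    Function.Injective (fun v : V => v ⊗ₜ[ℂ] w) := by
  have h : ∀ v : V, ((TensorProduct.rid ℂ V).toLinearMap ∘ₗ
      TensorProduct.map LinearMap.id φ) (v ⊗ₜ[ℂ] w) = v := by
    intro v; simp [hφ]
  intro v v' hvv'
  have := congrArg ((TensorProduct.rid ℂ V).toLinearMap ∘ₗ
      TensorProduct.map LinearMap.id φ) hvv'
  rwa [h, h] at this

lemma tmul_left_injective {v : V} (φ : V →ₗ[ℂ] ℂ) (hφ : φ v = 1) :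
    Function.Injective (fun w : W => v ⊗ₜ[ℂ] w) := by
  have h : ∀ w : W, ((TensorProduct.lid ℂ W).toLinearMap ∘ₗ
      TensorProduct.map φ LinearMap.id) (v ⊗ₜ[ℂ] w) = w := by
    intro w; simp [hφ]
  intro w w' hww'
  have := congrArg ((TensorProduct.lid ℂ W).toLinearMap ∘ₗ
      TensorProduct.map φ LinearMap.id) hww'
  rwa [h, h] at this

end Aux

set_option maxHeartbeats 1000000 in
/-- **Exact embezzlement implies local containment of infinitely many copies of the target
state** (Theorem 3.6, algebraic form).  If `Φ_A : A_f ⊗ A_g ≃⋆ A_f` and `Φ_B : B_f ⊗ B_g ≃⋆ B_f`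
are star-algebra isomorphisms, `f` and `g` are unital linear functionals with
`f ∘ (Φ_A ⊗ Φ_B) ∘ σ = f ⊗ g` (where `σ` is the canonical reordering), then there are sequences
of injective star-algebra homomorphisms `π_A^(n) : A_g → A_f` and `π_B^(n) : B_g → B_f` with
pairwise commuting images such that `f ∘ (π_A^(n) ⊗ π_B^(n)) = g` for every `n`. -/
theorem embezzlement_implies_local_containment
    {Af Bf Ag Bg : Type*}
    [Ring Af] [Algebra ℂ Af] [StarRing Af] [StarModule ℂ Af]
    [Ring Bf] [Algebra ℂ Bf] [StarRing Bf] [StarModule ℂ Bf]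
    [Ring Ag] [Algebra ℂ Ag] [StarRing Ag] [StarModule ℂ Ag]
    [Ring Bg] [Algebra ℂ Bg] [StarRing Bg] [StarModule ℂ Bg]
    (ΦA : (Af ⊗[ℂ] Ag) ≃⋆ₐ[ℂ] Af) (ΦB : (Bf ⊗[ℂ] Bg) ≃⋆ₐ[ℂ] Bf)
    (f : (Af ⊗[ℂ] Bf) →ₗ[ℂ] ℂ) (g : (Ag ⊗[ℂ] Bg) →ₗ[ℂ] ℂ)
    (hf : f 1 = 1) (hg : g 1 = 1)
    (hemb : ∀ X : (Af ⊗[ℂ] Bf) ⊗[ℂ] (Ag ⊗[ℂ] Bg),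
      f (Algebra.TensorProduct.map (AlgHomClass.toAlgHom ΦA) (AlgHomClass.toAlgHom ΦB)
          (Algebra.TensorProduct.tensorTensorTensorComm ℂ ℂ ℂ ℂ Af Bf Ag Bg X)) = tensorFun f g X) :
    ∃ (πA : ℕ → (Ag →⋆ₐ[ℂ] Af)) (πB : ℕ → (Bg →⋆ₐ[ℂ] Bf)),
      (∀ n, Function.Injective (πA n)) ∧
      (∀ n, Function.Injective (πB n)) ∧
      (∀ m n, m ≠ n → ∀ x y, Commute (πA m x) (πA n y)) ∧
      (∀ m n, m ≠ n → ∀ x y, Commute (πB m x) (πB n y)) ∧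
      (∀ n, ∀ P : Ag ⊗[ℂ] Bg,
        f (Algebra.TensorProduct.map (πA n).toAlgHom (πB n).toAlgHom P) = g P) := by
  classical
  -- Nontriviality of the units
  have hAg1 : (1 : Ag) ≠ 0 := by
    intro h
    have : (1 : Ag ⊗[ℂ] Bg) = 0 := by
      rw [Algebra.TensorProduct.one_def, h, TensorProduct.zero_tmul]
    rw [this, map_zero] at hg
    exact one_ne_zero hg.symm
  have hBg1 : (1 : Bg) ≠ 0 := by
    intro h
    have : (1 : Ag ⊗[ℂ] Bg) = 0 := by
      rw [Algebra.TensorProduct.one_def, h, TensorProduct.tmul_zero]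
    rw [this, map_zero] at hg
    exact one_ne_zero hg.symm
  have hAf1 : (1 : Af) ≠ 0 := by
    intro h
    have : (1 : Af ⊗[ℂ] Bf) = 0 := by
      rw [Algebra.TensorProduct.one_def, h, TensorProduct.zero_tmul]
    rw [this, map_zero] at hf
    exact one_ne_zero hf.symm
  have hBf1 : (1 : Bf) ≠ 0 := by
    intro h
    have : (1 : Af ⊗[ℂ] Bf) = 0 := by
      rw [Algebra.TensorProduct.one_def, h, TensorProduct.tmul_zero]
    rw [this, map_zero] at hf
    exact one_ne_zero hf.symm
  obtain ⟨φAf, hφAf⟩ := exists_dual_one hAf1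
  obtain ⟨φBf, hφBf⟩ := exists_dual_one hBf1
  obtain ⟨φAg, hφAg⟩ := exists_dual_one hAg1
  obtain ⟨φBg, hφBg⟩ := exists_dual_one hBg1
  -- The basic star-algebra homomorphisms
  let ιA : Ag →⋆ₐ[ℂ] Af :=
    { (AlgHomClass.toAlgHom ΦA).comp Algebra.TensorProduct.includeRight with
      map_star' := fun x => by
        show ΦA ((1 : Af) ⊗ₜ[ℂ] star x) = star (ΦA ((1 : Af) ⊗ₜ[ℂ] x))
        rw [← map_star ΦA, TensorProduct.star_tmul_tensorStar, star_one] }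
  let ιB : Bg →⋆ₐ[ℂ] Bf :=
    { (AlgHomClass.toAlgHom ΦB).comp Algebra.TensorProduct.includeRight with
      map_star' := fun x => by
        show ΦB ((1 : Bf) ⊗ₜ[ℂ] star x) = star (ΦB ((1 : Bf) ⊗ₜ[ℂ] x))
        rw [← map_star ΦB, TensorProduct.star_tmul_tensorStar, star_one] }
  let TA : Af →⋆ₐ[ℂ] Af :=
    { (AlgHomClass.toAlgHom ΦA).comp Algebra.TensorProduct.includeLeft with
      map_star' := fun a => by
        show ΦA (star a ⊗ₜ[ℂ] (1 : Ag)) = star (ΦA (a ⊗ₜ[ℂ] (1 : Ag)))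
        rw [← map_star ΦA, TensorProduct.star_tmul_tensorStar, star_one] }
  let TB : Bf →⋆ₐ[ℂ] Bf :=
    { (AlgHomClass.toAlgHom ΦB).comp Algebra.TensorProduct.includeLeft with
      map_star' := fun a => by
        show ΦB (star a ⊗ₜ[ℂ] (1 : Bg)) = star (ΦB (a ⊗ₜ[ℂ] (1 : Bg)))
        rw [← map_star ΦB, TensorProduct.star_tmul_tensorStar, star_one] }
  have hιA : ∀ x, ιA x = ΦA ((1 : Af) ⊗ₜ[ℂ] x) := fun _ => rfl
  have hιB : ∀ x, ιB x = ΦB ((1 : Bf) ⊗ₜ[ℂ] x) := fun _ => rfl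
  have hTA : ∀ a, TA a = ΦA (a ⊗ₜ[ℂ] (1 : Ag)) := fun _ => rfl
  have hTB : ∀ a, TB a = ΦB (a ⊗ₜ[ℂ] (1 : Bg)) := fun _ => rfl
  -- Injectivity of the building blocks
  have hιAinj : Function.Injective ιA := by
    intro x y hxy
    rw [hιA, hιA] at hxy
    exact tmul_left_injective φAf hφAf (ΦA.injective hxy)
  have hιBinj : Function.Injective ιB := by
    intro x y hxy
    rw [hιB, hιB] at hxy
    exact tmul_left_injective φBf hφBf (ΦB.injective hxy)
  have hTAinj : Function.Injective TA := by
    intro x y hxy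
    rw [hTA, hTA] at hxy
    exact tmul_right_injective φAg hφAg (ΦA.injective hxy)
  have hTBinj : Function.Injective TB := by
    intro x y hxy
    rw [hTB, hTB] at hxy
    exact tmul_right_injective φBg hφBg (ΦB.injective hxy)
  -- Basic commutation
  have hcA : ∀ (x : Ag) (a : Af), Commute (ιA x) (TA a) := by
    intro x a
    show ιA x * TA a = TA a * ιA x
    rw [hιA, hTA, ← map_mul, ← map_mul, Algebra.TensorProduct.tmul_mul_tmul,
      Algebra.TensorProduct.tmul_mul_tmul, one_mul, mul_one, one_mul, mul_one]
  have hcB : ∀ (x : Bg) (a : Bf), Commute (ιB x) (TB a) := by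
    intro x a
    show ιB x * TB a = TB a * ιB x
    rw [hιB, hTB, ← map_mul, ← map_mul, Algebra.TensorProduct.tmul_mul_tmul,
      Algebra.TensorProduct.tmul_mul_tmul, one_mul, mul_one, one_mul, mul_one]
  -- The sequences
  let πA : ℕ → (Ag →⋆ₐ[ℂ] Af) := fun n => Nat.rec ιA (fun _ p => TA.comp p) n
  let πB : ℕ → (Bg →⋆ₐ[ℂ] Bf) := fun n => Nat.rec ιB (fun _ p => TB.comp p) n
  have hπA0 : πA 0 = ιA := rfl
  have hπAs : ∀ n, πA (n + 1) = TA.comp (πA n) := fun _ => rfl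
  have hπB0 : πB 0 = ιB := rfl
  have hπBs : ∀ n, πB (n + 1) = TB.comp (πB n) := fun _ => rfl
  have hπAit : ∀ n x, πA n x = TA^[n] (ιA x) := by
    intro n
    induction n with
    | zero => intro x; rfl
    | succ n ih =>
        intro x
        rw [hπAs, StarAlgHom.comp_apply, ih, Function.iterate_succ_apply']
  have hπBit : ∀ n x, πB n x = TB^[n] (ιB x) := by
    intro n
    induction n with
    | zero => intro x; rfl
    | succ n ih =>
        intro x
        rw [hπBs, StarAlgHom.comp_apply, ih, Function.iterate_succ_apply']
  -- Commutation of iterates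
  have hitcA : ∀ (k : ℕ) (a b : Af), Commute a b → Commute (TA^[k] a) (TA^[k] b) := by
    intro k
    induction k with
    | zero => intro a b h; exact h
    | succ k ih =>
        intro a b h
        rw [Function.iterate_succ_apply', Function.iterate_succ_apply']
        exact (ih a b h).map TA
  have hitcB : ∀ (k : ℕ) (a b : Bf), Commute a b → Commute (TB^[k] a) (TB^[k] b) := by
    intro k
    induction k with
    | zero => intro a b h; exact h
    | succ k ih =>
        intro a b h
        rw [Function.iterate_succ_apply', Function.iterate_succ_apply']
        exact (ih a b h).map TB
  have hltA : ∀ m n, m < n → ∀ x y, Commute (πA m x) (πA n y) := by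
    intro m n hmn x y
    obtain ⟨k, rfl⟩ : ∃ k, n = m + (k + 1) := ⟨n - m - 1, by omega⟩
    rw [hπAit, hπAit, Function.iterate_add_apply, Function.iterate_succ_apply']
    exact hitcA m _ _ (hcA x (TA^[k] (ιA y)))
  have hltB : ∀ m n, m < n → ∀ x y, Commute (πB m x) (πB n y) := by
    intro m n hmn x y
    obtain ⟨k, rfl⟩ : ∃ k, n = m + (k + 1) := ⟨n - m - 1, by omega⟩
    rw [hπBit, hπBit, Function.iterate_add_apply, Function.iterate_succ_apply']
    exact hitcB m _ _ (hcB x (TB^[k] (ιB y)))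
  -- State invariance under T ⊗ T
  have hTf : ∀ Q : Af ⊗[ℂ] Bf,
      f (Algebra.TensorProduct.map TA.toAlgHom TB.toAlgHom Q) = f Q := by
    intro Q
    have key : Algebra.TensorProduct.map (AlgHomClass.toAlgHom ΦA) (AlgHomClass.toAlgHom ΦB)
        (Algebra.TensorProduct.tensorTensorTensorComm ℂ ℂ ℂ ℂ Af Bf Ag Bg
          (Q ⊗ₜ[ℂ] (1 : Ag ⊗[ℂ] Bg)))
        = Algebra.TensorProduct.map TA.toAlgHom TB.toAlgHom Q := by
      induction Q with
      | zero => simp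
      | tmul a b =>
          rw [Algebra.TensorProduct.one_def, Algebra.TensorProduct.tensorTensorTensorComm_tmul,
            Algebra.TensorProduct.map_tmul, Algebra.TensorProduct.map_tmul]
          rfl
      | add q q' hq hq' =>
          rw [TensorProduct.add_tmul, map_add, map_add, map_add, hq, hq']
    have h := hemb (Q ⊗ₜ[ℂ] (1 : Ag ⊗[ℂ] Bg))
    rw [key] at h
    rw [h, tensorFun_tmul, hg, mul_one]
  have hιf : ∀ P : Ag ⊗[ℂ] Bg,
      f (Algebra.TensorProduct.map ιA.toAlgHom ιB.toAlgHom P) = g P := by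
    intro P
    have key : Algebra.TensorProduct.map (AlgHomClass.toAlgHom ΦA) (AlgHomClass.toAlgHom ΦB)
        (Algebra.TensorProduct.tensorTensorTensorComm ℂ ℂ ℂ ℂ Af Bf Ag Bg
          ((1 : Af ⊗[ℂ] Bf) ⊗ₜ[ℂ] P))
        = Algebra.TensorProduct.map ιA.toAlgHom ιB.toAlgHom P := by
      induction P with
      | zero => simp
      | tmul x y =>
          rw [Algebra.TensorProduct.one_def, Algebra.TensorProduct.tensorTensorTensorComm_tmul,
            Algebra.TensorProduct.map_tmul, Algebra.TensorProduct.map_tmul]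
          rfl
      | add p p' hp hp' =>
          rw [TensorProduct.tmul_add, map_add, map_add, map_add, hp, hp']
    have h := hemb ((1 : Af ⊗[ℂ] Bf) ⊗ₜ[ℂ] P)
    rw [key] at h
    rw [h, tensorFun_tmul, hf, one_mul]
  -- Final assembly
  refine ⟨πA, πB, ?_, ?_, ?_, ?_, ?_⟩
  · intro n
    induction n with
    | zero => exact hιAinj
    | succ n ih =>
        rw [hπAs]
        exact hTAinj.comp ih
  · intro n
    induction n with
    | zero => exact hιBinj
    | succ n ih =>
        rw [hπBs]
        exact hTBinj.comp ih
  · intro m n hmn x y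
    rcases lt_or_gt_of_ne hmn with h | h
    · exact hltA m n h x y
    · exact (hltA n m h y x).symm
  · intro m n hmn x y
    rcases lt_or_gt_of_ne hmn with h | h
    · exact hltB m n h x y
    · exact (hltB n m h y x).symm
  · intro n
    induction n with
    | zero => exact hιf
    | succ n ih =>
        intro P
        have hcomp : (πA (n + 1)).toAlgHom = TA.toAlgHom.comp (πA n).toAlgHom := rfl
        have hcomp' : (πB (n + 1)).toAlgHom = TB.toAlgHom.comp (πB n).toAlgHom := rfl
        rw [hcomp, hcomp', Algebra.TensorProduct.map_comp, AlgHom.comp_apply, hTf, ih]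
end

section
/- Commutativity of recursively lifted observables. Let A_f and A_g be unital complex algebras and Φ_A : A_f ⊗ A_g → A_f a unital algebra homomorphism. Define maps M_n : A_g → A_f recursively by M_1(x) := Φ_A(1 ⊗ x) and M_{n+1}(x) := Φ_A(M_n(x) ⊗ 1). Then for all m ≠ n and all x, y ∈ A_g, the elements M_m(x) and M_n(y) commute: M_m(x) M_n(y) = M_n(y) M_m(x). -/
/-!
`a ⊗ 1` commutes with `1 ⊗ b`, and `a ⊗ 1` commutes with `b ⊗ 1` whenever `a` commutes with `b`;
both relations survive the algebra map `Φ`. Hence `M₁(x)` commutes with every `M_{n+1}(y)`, and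
applying `Φ (· ⊗ 1)` to both sides of a commuting pair `(M_m x, M_n y)` shifts the indices by one.
-/

open TensorProduct

/-- The recursively lifted observable maps: `liftedObs Φ 0 x = Φ (1 ⊗ x)` (this is `M_1` in the
paper, i.e. we index from `0`), and `liftedObs Φ (n+1) x = Φ (liftedObs Φ n x ⊗ 1)`. -/
noncomputable def liftedObs {Af Ag : Type*} [Ring Af] [Ring Ag] [Algebra ℂ Af] [Algebra ℂ Ag]
    (Φ : Af ⊗[ℂ] Ag →ₐ[ℂ] Af) : ℕ → Ag → Af
  | 0, x => Φ ((1 : Af) ⊗ₜ[ℂ] x)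
  | n + 1, x => Φ (liftedObs Φ n x ⊗ₜ[ℂ] (1 : Ag))

theorem liftedObs_commute_of_lt {Af Ag : Type*} [Ring Af] [Ring Ag] [Algebra ℂ Af]
    [Algebra ℂ Ag] (Φ : Af ⊗[ℂ] Ag →ₐ[ℂ] Af) {m n : ℕ} (hmn : m < n) (x y : Ag) :
    Commute (liftedObs Φ m x) (liftedObs Φ n y) := by
  induction m generalizing n with
  | zero =>
    obtain ⟨n, rfl⟩ := Nat.exists_eq_add_one_of_ne_zero hmn.ne'
    exact ((Commute.one_left _).tmul (Commute.one_right x)).map Φ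
  | succ m ih =>
    obtain ⟨n, rfl⟩ := Nat.exists_eq_add_one_of_ne_zero (by omega : n ≠ 0)
    exact ((ih (Nat.lt_of_succ_lt_succ hmn)).tmul (Commute.refl 1)).map Φ

/-- **Commutativity of recursively lifted observables.**  If `Φ_A : A_f ⊗ A_g → A_f` is a unital
algebra homomorphism and `M_n : A_g → A_f` are defined recursively by `M_1 x = Φ_A (1 ⊗ x)` and
`M_{n+1} x = Φ_A (M_n x ⊗ 1)`, then for `m ≠ n` the elements `M_m x` and `M_n y` commute. -/
theorem liftedObs_commute {Af Ag : Type*} [Ring Af] [Ring Ag] [Algebra ℂ Af] [Algebra ℂ Ag]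
    (Φ : Af ⊗[ℂ] Ag →ₐ[ℂ] Af) :
    ∀ m n : ℕ, m ≠ n → ∀ x y : Ag,
      liftedObs Φ m x * liftedObs Φ n y = liftedObs Φ n y * liftedObs Φ m x := by
  intro m n hmn x y
  rcases hmn.lt_or_gt with h | h
  · exact (liftedObs_commute_of_lt Φ h x y).eq
  · exact (liftedObs_commute_of_lt Φ h y x).symm.eq
end

section
/- Certification identity for the iterated embezzlement maps. Let A_f, B_f, A_g, B_g be unital complex star algebras, let Φ_A : A_f ⊗ A_g → A_f and Φ_B : B_f ⊗ B_g → B_f be star-algebra isomorphisms, and let Φ : A_f ⊗ B_f ⊗ A_g ⊗ B_g → A_f ⊗ B_f denote (Φ_A ⊗ Φ_B) ∘ σ, where σ is the canonical reordering isomorphism onto (A_f ⊗ A_g) ⊗ (B_f ⊗ B_g). Let f be a unital linear functional on A_f ⊗ B_f and g a unital linear functional on A_g ⊗ B_g with f ∘ Φ = f ⊗ g. Define Φ_A^(1) := Φ_A and Φ_A^(n)(X) := Φ_A(Φ_A^(n−1)(X) ⊗ 1) for n ≥ 2, and set π_A^(n)(x) := Φ_A^(n)(1 ⊗ x) for x ∈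 A_g; define Φ_B^(n) and π_B^(n) analogously. Then for every n ≥ 1 and all A ∈ A_g, B ∈ B_g, f(π_A^(n)(A) ⊗ π_B^(n)(B)) = g(A ⊗ B); hence by linearity f((π_A^(n) ⊗ π_B^(n))(P)) = g(P) for all P ∈ A_g ⊗ B_g. -/
open TensorProduct

section Iterates

variable {Af Ag : Type*}
  [Ring Af] [Algebra ℂ Af] [StarRing Af] [StarModule ℂ Af]
  [Ring Ag] [Algebra ℂ Ag] [StarRing Ag] [StarModule ℂ Ag]

/-- The iterated embezzlement maps: `iterPhi Φ 0 = Φ` (this is `Φ_A^(1)` in the paper, i.e. we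
index from `0`) and `iterPhi Φ (n+1) X = Φ (iterPhi Φ n X ⊗ 1)`. -/
noncomputable def iterPhi (Φ : (Af ⊗[ℂ] Ag) ≃⋆ₐ[ℂ] Af) : ℕ → ((Af ⊗[ℂ] Ag) →ₗ[ℂ] Af)
  | 0 => (AlgHomClass.toAlgHom Φ).toLinearMap
  | n + 1 => (AlgHomClass.toAlgHom Φ).toLinearMap ∘ₗ
      ((TensorProduct.mk ℂ Af Ag).flip 1) ∘ₗ iterPhi Φ n

/-- `iterPi Φ n x = iterPhi Φ n (1 ⊗ x)`; this is `π_A^(n+1)` in the paper. -/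
noncomputable def iterPi (Φ : (Af ⊗[ℂ] Ag) ≃⋆ₐ[ℂ] Af) (n : ℕ) : Ag →ₗ[ℂ] Af :=
  iterPhi Φ n ∘ₗ TensorProduct.mk ℂ Af Ag 1

end Iterates

/-- **Certification identity for the iterated embezzlement maps** (part of Theorem 3.6).
Under the exact embezzlement hypothesis `f ∘ (Φ_A ⊗ Φ_B) ∘ σ = f ⊗ g`, the iterated maps
`π_A^(n)(x) = Φ_A^(n)(1 ⊗ x)` and `π_B^(n)(y) = Φ_B^(n)(1 ⊗ y)` satisfy
`f (π_A^(n) A ⊗ π_B^(n) B) = g (A ⊗ B)` for all `n`, and hence by linearity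
`f ((π_A^(n) ⊗ π_B^(n)) P) = g P` for all `P`. -/
theorem certification_identity
    {Af Bf Ag Bg : Type*}
    [Ring Af] [Algebra ℂ Af] [StarRing Af] [StarModule ℂ Af]
    [Ring Bf] [Algebra ℂ Bf] [StarRing Bf] [StarModule ℂ Bf]
    [Ring Ag] [Algebra ℂ Ag] [StarRing Ag] [StarModule ℂ Ag]
    [Ring Bg] [Algebra ℂ Bg] [StarRing Bg] [StarModule ℂ Bg]
    (ΦA : (Af ⊗[ℂ] Ag) ≃⋆ₐ[ℂ] Af) (ΦB : (Bf ⊗[ℂ] Bg) ≃⋆ₐ[ℂ] Bf)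
    (f : (Af ⊗[ℂ] Bf) →ₗ[ℂ] ℂ) (g : (Ag ⊗[ℂ] Bg) →ₗ[ℂ] ℂ)
    (hf : f 1 = 1) (hg : g 1 = 1)
    (hemb : ∀ X : (Af ⊗[ℂ] Bf) ⊗[ℂ] (Ag ⊗[ℂ] Bg),
      f (Algebra.TensorProduct.map (AlgHomClass.toAlgHom ΦA) (AlgHomClass.toAlgHom ΦB)
          (Algebra.TensorProduct.tensorTensorTensorComm ℂ ℂ ℂ ℂ Af Bf Ag Bg X)) = tensorFun f g X) :
    (∀ (n : ℕ) (A : Ag) (B : Bg),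
      f (iterPi ΦA n A ⊗ₜ[ℂ] iterPi ΦB n B) = g (A ⊗ₜ[ℂ] B)) ∧
    (∀ (n : ℕ) (P : Ag ⊗[ℂ] Bg),
      f (TensorProduct.map (iterPi ΦA n) (iterPi ΦB n) P) = g P) := by
  have key : ∀ (a : Af) (b : Bf) (A : Ag) (B : Bg),
      f (((AlgHomClass.toAlgHom ΦA) (a ⊗ₜ[ℂ] A)) ⊗ₜ[ℂ] ((AlgHomClass.toAlgHom ΦB) (b ⊗ₜ[ℂ] B)))
        = f (a ⊗ₜ[ℂ] b) * g (A ⊗ₜ[ℂ] B) := by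
    intro a b A B
    have := hemb ((a ⊗ₜ[ℂ] b) ⊗ₜ[ℂ] (A ⊗ₜ[ℂ] B))
    simpa [Algebra.TensorProduct.tensorTensorTensorComm_tmul] using this
  have main : ∀ (n : ℕ) (a : Af) (b : Bf) (A : Ag) (B : Bg),
      f ((iterPhi ΦA n (a ⊗ₜ[ℂ] A)) ⊗ₜ[ℂ] (iterPhi ΦB n (b ⊗ₜ[ℂ] B)))
        = f (a ⊗ₜ[ℂ] b) * g (A ⊗ₜ[ℂ] B) := by
    intro n
    induction n with
    | zero => intro a b A B; exact key a b A B
    | succ n ih =>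
        intro a b A B
        have h1 : iterPhi ΦA (n+1) (a ⊗ₜ[ℂ] A)
            = (AlgHomClass.toAlgHom ΦA) ((iterPhi ΦA n (a ⊗ₜ[ℂ] A)) ⊗ₜ[ℂ] (1 : Ag)) := rfl
        have h2 : iterPhi ΦB (n+1) (b ⊗ₜ[ℂ] B)
            = (AlgHomClass.toAlgHom ΦB) ((iterPhi ΦB n (b ⊗ₜ[ℂ] B)) ⊗ₜ[ℂ] (1 : Bg)) := rfl
        rw [h1, h2, key, ih]
        have hone : ((1 : Ag) ⊗ₜ[ℂ] (1 : Bg)) = (1 : Ag ⊗[ℂ] Bg) := rfl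
        rw [hone, hg, mul_one]
  have part1 : ∀ (n : ℕ) (A : Ag) (B : Bg),
      f (iterPi ΦA n A ⊗ₜ[ℂ] iterPi ΦB n B) = g (A ⊗ₜ[ℂ] B) := by
    intro n A B
    have : iterPi ΦA n A = iterPhi ΦA n ((1 : Af) ⊗ₜ[ℂ] A) := rfl
    rw [this]
    have : iterPi ΦB n B = iterPhi ΦB n ((1 : Bf) ⊗ₜ[ℂ] B) := rfl
    rw [this, main]
    have hone : ((1 : Af) ⊗ₜ[ℂ] (1 : Bf)) = (1 : Af ⊗[ℂ] Bf) := rfl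
    rw [hone, hf, one_mul]
  refine ⟨part1, fun n P => ?_⟩
  induction P with
  | zero => simp
  | tmul A B => simpa using part1 n A B
  | add x y hx hy => simp only [map_add, hx, hy]
end

section
/- Product factorization for commuting certified copies of a pure state (core of Proposition 3.5, forward direction). Let A and B be unital C*-algebras, let g be a pure state on A and f a state on B, and let π_1, …, π_n : A → B be injective unital star-homomorphisms whose images pairwise commute (for all i ≠ j and all x, y ∈ A, π_i(x) π_j(y) = π_j(y) π_i(x)) and which satisfy f ∘ π_i = g for each i. Then for all a_1, …, a_n ∈ A, f(π_1(a_1) π_2(a_2) ⋯ π_n(a_n)) = g(a_1) g(a_2) ⋯ g(a_n). -/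
open scoped ComplexOrder
open Pointwise
/-- A state on a unital C*-algebra `A`: a continuous linear functional `f : A → ℂ` with
`f 1 = 1` and `f (a* a) ≥ 0` (i.e. a nonnegative real number) for all `a`. -/
def IsState (A : Type*) [CStarAlgebra A] (f : A →L[ℂ] ℂ) : Prop :=
  f 1 = 1 ∧ ∀ a : A, 0 ≤ f (star a * a)

/-- A pure state on a unital C*-algebra `A`: an extreme point of the convex set of all
states on `A`. -/
def IsPureState (A : Type*) [CStarAlgebra A] (g : A →L[ℂ] ℂ) : Prop :=
  g ∈ Set.extremePoints ℝ {f : A →L[ℂ] ℂ | IsState A f}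



section Commute

variable {B : Type*} [CStarAlgebra B]

lemma commute_cfc_of_commute {b e : B} (he : IsSelfAdjoint e) (hbe : Commute b e) (f : ℝ → ℝ) :
    Commute b (cfc f e) := by
  refine cfc_cases (fun x => Commute b x) e f (Commute.zero_right b) fun hf he' => ?_
  suffices h : ∀ g : C(spectrum ℝ e, ℝ), Commute b (cfcHom he' g) from h _
  intro g
  let S : Subalgebra ℝ C(spectrum ℝ e, ℝ) :=
    (Subalgebra.centralizer ℝ {b}).comap (cfcHom he' (R := ℝ)).toAlgHom
  have hcent : (Subalgebra.centralizer ℝ {b} : Set B) = {x : B | b * x = x * b} := by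
    ext x
    simp [Subalgebra.mem_centralizer_iff, Set.mem_centralizer_iff]
  have hclosed : IsClosed (S : Set C(spectrum ℝ e, ℝ)) := by
    have h1 : IsClosed {x : B | b * x = x * b} :=
      isClosed_eq (continuous_const.mul continuous_id) (continuous_id.mul continuous_const)
    have : (S : Set C(spectrum ℝ e, ℝ))
        = (cfcHom he' (R := ℝ)) ⁻¹' {x : B | b * x = x * b} := by
      rw [← hcent]; rfl
    rw [this]
    exact h1.preimage (cfcHom_isClosedEmbedding he').continuous
  have hle : polynomialFunctions (spectrum ℝ e) ≤ S := by
    rw [polynomialFunctions.eq_adjoin_X]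
    apply Algebra.adjoin_le
    rintro x hx
    rw [Set.mem_singleton_iff] at hx
    subst hx
    show cfcHom he' (Polynomial.X.toContinuousMapOn (spectrum ℝ e)) ∈ Subalgebra.centralizer ℝ {b}
    rw [Polynomial.toContinuousMapOn_X_eq_restrict_id, cfcHom_id he']
    rw [Subalgebra.mem_centralizer_iff]
    rintro m hm
    rw [Set.mem_singleton_iff] at hm
    subst hm
    exact hbe
  have htop : S = ⊤ := by
    refine top_unique ?_
    rw [← polynomialFunctions.topologicalClosure (spectrum ℝ e)]
    exact Subalgebra.topologicalClosure_minimal hle hclosed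
  have hg : g ∈ S := htop ▸ Algebra.mem_top
  have := hg
  rw [Subalgebra.mem_comap, Subalgebra.mem_centralizer_iff] at this
  exact this b rfl

end Commute



section Zero

lemma quad_nonneg_eq_zero {α β : ℂ} (hβ : 0 ≤ β)
    (H : ∀ t : ℝ, 0 ≤ (t : ℂ) * α + (t : ℂ) ^ 2 * β) : α = 0 := by
  obtain ⟨hβre, hβim⟩ := Complex.nonneg_iff.mp hβ
  have him : α.im = 0 := by
    have h1 := (Complex.nonneg_iff.mp (H 1)).2
    simpa [← hβim] using h1.symm
  have hre : α.re = 0 := by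
    set t : ℝ := -α.re / (β.re + 1) with ht
    have hb1 : (0:ℝ) < β.re + 1 := by linarith
    have key := (Complex.nonneg_iff.mp (H t)).1
    have hkey : 0 ≤ t * α.re + t ^ 2 * β.re := by
      have hc : ((t : ℂ) * α + (t : ℂ) ^ 2 * β).re = t * α.re + t ^ 2 * β.re := by
        simp [Complex.mul_re, Complex.add_re, him, ← hβim, pow_two]
      rw [hc] at key
      exact key
    have hd : (β.re + 1) ≠ 0 := hb1.ne'
    have h4 : (β.re + 1) ^ 2 * (t * α.re + t ^ 2 * β.re)
        = -α.re ^ 2 * (β.re + 1) + α.re ^ 2 * β.re := by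
      rw [ht]; field_simp
    have hN : 0 ≤ -α.re ^ 2 * (β.re + 1) + α.re ^ 2 * β.re := by
      rw [← h4]
      exact mul_nonneg (le_of_lt (pow_pos hb1 2)) hkey
    have hsq : α.re ^ 2 ≤ 0 := by nlinarith [hN]
    have := le_antisymm hsq (sq_nonneg α.re)
    exact pow_eq_zero_iff (by norm_num) |>.mp this
  exact Complex.ext hre him

variable {A : Type*} [CStarAlgebra A]

lemma pos_functional_eq_zero (h : A →L[ℂ] ℂ)
    (hpos : ∀ a : A, 0 ≤ h (star a * a)) (h1 : h 1 = 0) (a : A) : h a = 0 := by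
  have expand : ∀ w : ℂ, h (star ((1 : A) + w • a) * ((1 : A) + w • a))
      = (starRingEnd ℂ) w * h (star a) + w * h a + (w * (starRingEnd ℂ) w) * h (star a * a) := by
    intro w
    have hx : star ((1 : A) + w • a) * ((1 : A) + w • a)
        = 1 + w • a + (starRingEnd ℂ) w • star a
          + ((w * (starRingEnd ℂ) w)) • (star a * a) := by
      simp [star_add, star_smul, add_mul, mul_add, smul_mul_assoc, mul_smul_comm, smul_smul,
        Complex.star_def]
      abel
    rw [hx]
    simp [map_add, map_smul, h1, Complex.star_def]
    ring
  have key1 : h (star a) + h a = 0 := by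
    refine quad_nonneg_eq_zero (hpos a) fun t => ?_
    have := hpos ((1 : A) + (t : ℂ) • a)
    rw [expand ((t : ℂ))] at this
    convert this using 1
    simp [Complex.conj_ofReal, pow_two]
    ring
  have key2 : h a - h (star a) = 0 := by
    have key2' : Complex.I * (h a - h (star a)) = 0 := by
      refine quad_nonneg_eq_zero (hpos a) fun t => ?_
      have := hpos ((1 : A) + ((t : ℂ) * Complex.I) • a)
      rw [expand ((t : ℂ) * Complex.I)] at this
      convert this using 1
      simp only [map_mul, Complex.conj_I, Complex.conj_ofReal]
      linear_combination (t : ℂ) ^ 2 * h (star a * a) * Complex.I_sq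
    have := mul_eq_zero.mp key2'
    simpa [Complex.I_ne_zero] using this
  have h2 : (2 : ℂ) * h a = 0 := by linear_combination key1 + key2
  simpa using h2
end Zero







section Dom

variable {A : Type*} [CStarAlgebra A]

lemma pure_dominates {g h : A →L[ℂ] ℂ} (hg : IsPureState A g)
    (hpos : ∀ a : A, 0 ≤ h (star a * a))
    (hdom : ∀ a : A, 0 ≤ g (star a * a) - h (star a * a)) (a : A) :
    h a = h 1 * g a := by
  have hgs : IsState A g := hg.1
  have hg1 : g 1 = 1 := hgs.1
  have h1nonneg : 0 ≤ h 1 := by simpa using hpos 1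
  have h1le : 0 ≤ 1 - h 1 := by
    have := hdom 1
    simpa [hg1] using this
  obtain ⟨ht0, him⟩ := Complex.nonneg_iff.mp h1nonneg
  set t : ℝ := (h 1).re with htdef
  have hth : h 1 = (t : ℂ) := by
    exact Complex.ext rfl him.symm
  have ht1 : t ≤ 1 := by
    have := (Complex.nonneg_iff.mp h1le).1
    simpa using this
  rcases eq_or_lt_of_le ht0 with h0 | h0
  · -- t = 0
    have hz : h 1 = 0 := by rw [hth, ← h0]; simp
    rw [hz, zero_mul]
    exact pos_functional_eq_zero h hpos hz a
  rcases eq_or_lt_of_le ht1 with h1' | h1'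
  · -- t = 1
    have htc : (t : ℂ) = 1 := by rw [h1', Complex.ofReal_one]
    have hz : (g - h) 1 = 0 := by
      simp [hg1, hth, htc]
    have h3 := pos_functional_eq_zero (g - h) (by simpa using hdom) hz a
    simp only [ContinuousLinearMap.sub_apply] at h3
    rw [hth, htc, one_mul]
    exact (sub_eq_zero.mp h3).symm
  · -- 0 < t < 1
    set x : A →L[ℂ] ℂ := (t⁻¹ : ℝ) • h with hxdef
    set y : A →L[ℂ] ℂ := ((1 - t)⁻¹ : ℝ) • (g - h) with hydef
    have hsmul : ∀ (r : ℝ) (φ : A →L[ℂ] ℂ) (b : A), (r • φ) b = (r : ℂ) * φ b := by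
      intro r φ b
      simp [Complex.real_smul]
    have hx : IsState A x := by
      constructor
      · rw [hxdef]; rw [hsmul, hth]
        rw [← Complex.ofReal_mul]
        norm_num [inv_mul_cancel₀ h0.ne']
      · intro b
        rw [hxdef, hsmul]
        refine mul_nonneg ?_ (hpos b)
        rw [Complex.zero_le_real]
        exact le_of_lt (inv_pos.mpr h0)
    have hy : IsState A y := by
      constructor
      · rw [hydef]; rw [hsmul]
        simp only [ContinuousLinearMap.sub_apply, hg1, hth]
        rw [← Complex.ofReal_one, ← Complex.ofReal_sub, ← Complex.ofReal_mul]
        norm_num [inv_mul_cancel₀ (by linarith : (1 : ℝ) - t ≠ 0)]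
      · intro b
        rw [hydef, hsmul]
        refine mul_nonneg ?_ (by simpa using hdom b)
        rw [Complex.zero_le_real]
        exact le_of_lt (inv_pos.mpr (by linarith : (0:ℝ) < 1 - t))
    have hmem : g ∈ openSegment ℝ x y := by
      refine ⟨t, 1 - t, h0, by linarith, by ring, ?_⟩
      rw [hxdef, hydef, smul_smul, smul_smul]
      rw [mul_inv_cancel₀ h0.ne', mul_inv_cancel₀ (by linarith : (1:ℝ) - t ≠ 0)]
      simp
    have hxg := hg.2 hx hy hmem
    have : h = (t : ℝ) • x := by
      rw [hxdef, smul_smul, mul_inv_cancel₀ h0.ne', one_smul]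
    rw [this, hxg, hsmul, hsmul, hg1, mul_one]

end Dom









section Key

variable {A B : Type*} [CStarAlgebra A] [CStarAlgebra B]

lemma state_nonneg_conj (f : B →L[ℂ] ℂ) (hf : IsState B f) (b s : B)
    (h : Commute b (star s * s)) : 0 ≤ f (star b * b * (star s * s)) := by
  have hrw : star b * b * (star s * s) = star (s * b) * (s * b) := by
    have h' : b * (star s * s) = (star s * s) * b := h
    rw [star_mul]
    calc star b * b * (star s * s) = star b * (b * (star s * s)) := by rw [mul_assoc]
      _ = star b * ((star s * s) * b) := by rw [h']
      _ = star b * star s * (s * b) := by simp only [mul_assoc]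
  rw [hrw]
  exact hf.2 _

/-- A unital star algebra hom of C*-algebras as a continuous linear map. -/
noncomputable def starHomCLM (π : A →⋆ₐ[ℂ] B) : A →L[ℂ] B :=
  LinearMap.mkContinuous π.toAlgHom.toLinearMap 1 fun x => by
    simpa using NonUnitalStarAlgHom.norm_apply_le π x

@[simp] lemma starHomCLM_apply (π : A →⋆ₐ[ℂ] B) (x : A) : starHomCLM π x = π x := rfl

lemma keySelf (g : A →L[ℂ] ℂ) (f : B →L[ℂ] ℂ) (hg : IsPureState A g) (hf : IsState B f)
    (π : A →⋆ₐ[ℂ] B) (hπ : ∀ x : A, f (π x) = g x) (c : B) (hsa : IsSelfAdjoint c)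
    (hc : ∀ x : A, Commute (π x) c) (a : A) : f (π a * c) = f c * g a := by
  rcases subsingleton_or_nontrivial B with hB | hB
  · exfalso
    have : f 1 = f 0 := by rw [Subsingleton.elim (1 : B) 0]
    rw [hf.1, map_zero] at this
    exact one_ne_zero this
  by_cases hc0 : c = 0
  · simp [hc0]
  set M : ℝ := ‖c‖ with hM
  have hM0 : 0 < M := norm_pos_iff.mpr hc0
  have hne : ((2 * M)⁻¹ : ℝ) ≠ 0 := by positivity
  set e : B := ((2 * M)⁻¹ : ℝ) • (c + algebraMap ℝ B M) with he
  have he_sa : IsSelfAdjoint e := by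
    rw [he]
    refine IsSelfAdjoint.smul (by exact star_trivial _) (hsa.add ?_)
    exact IsSelfAdjoint.algebraMap B (star_trivial M)
  -- spectrum of e is contained in [0,1]
  have hσ : spectrum ℝ e ⊆ Set.Icc 0 1 := by
    intro r hr
    rw [he] at hr
    have hσ1 : spectrum ℝ (c + algebraMap ℝ B M) = ({M} : Set ℝ) + spectrum ℝ c := by
      rw [spectrum.singleton_add_eq, add_comm]
    have hu : (((2 * M)⁻¹ : ℝ) • (c + algebraMap ℝ B M))
        = (Units.mk0 ((2 * M)⁻¹ : ℝ) hne) • (c + algebraMap ℝ B M) := rfl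
    rw [hu, spectrum.unit_smul_eq_smul, hσ1] at hr
    obtain ⟨z, hz, rfl⟩ := hr
    obtain ⟨m, hm, μ, hμ, rfl⟩ := Set.mem_add.mp hz
    rw [Set.mem_singleton_iff] at hm
    subst hm
    have hμM : |μ| ≤ M := by
      have := spectrum.norm_le_norm_of_mem hμ
      simpa [hM] using this
    have habs := abs_le.mp hμM
    constructor
    · have : (0 : ℝ) ≤ M + μ := by linarith
      have h2M : (0:ℝ) < (2 * M)⁻¹ := by positivity
      simpa [Units.smul_def, smul_eq_mul] using mul_nonneg h2M.le this
    · have : M + μ ≤ 2 * M := by linarith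
      have h2M : (0:ℝ) < (2 * M)⁻¹ := by positivity
      calc (Units.mk0 ((2 * M)⁻¹ : ℝ) hne) • (M + μ) = (2 * M)⁻¹ * (M + μ) := by
            simp [Units.smul_def]
            ring
        _ ≤ (2 * M)⁻¹ * (2 * M) := by
            exact mul_le_mul_of_nonneg_left this h2M.le
        _ = 1 := by field_simp
  -- the square roots
  set s : B := cfc Real.sqrt e with hs
  set t : B := cfc (fun r : ℝ => Real.sqrt (1 - r)) e with hts
  have hs_sa : IsSelfAdjoint s := cfc_predicate _ _
  have ht_sa : IsSelfAdjoint t := cfc_predicate _ _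
  have hss : s * s = e := by
    rw [hs, ← cfc_mul _ _ e]
    rw [show (fun r => Real.sqrt r * Real.sqrt r) = fun r : ℝ => Real.sqrt r * Real.sqrt r from rfl]
    calc cfc (fun r : ℝ => Real.sqrt r * Real.sqrt r) e = cfc (id : ℝ → ℝ) e := by
          refine cfc_congr fun r hr => ?_
          exact Real.mul_self_sqrt (hσ hr).1
      _ = e := cfc_id ℝ e
  have htt : t * t = 1 - e := by
    rw [hts, ← cfc_mul _ _ e]
    calc cfc (fun r : ℝ => Real.sqrt (1 - r) * Real.sqrt (1 - r)) e
        = cfc (fun r : ℝ => 1 - r) e := by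
          refine cfc_congr fun r hr => ?_
          exact Real.mul_self_sqrt (by linarith [(hσ hr).2])
      _ = 1 - e := by
          rw [cfc_sub (fun _ : ℝ => (1:ℝ)) (fun r : ℝ => r) e, cfc_const_one ℝ e, cfc_id' ℝ e]
  have hce : ∀ x : A, Commute (π x) e := by
    intro x
    rw [he]
    refine Commute.smul_right ?_ _
    exact (hc x).add_right (Algebra.commute_algebraMap_right M (π x))
  have hs_comm : ∀ x : A, Commute (π x) s := fun x => commute_cfc_of_commute he_sa (hce x) _
  have ht_comm : ∀ x : A, Commute (π x) t := fun x => commute_cfc_of_commute he_sa (hce x) _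
  -- the functional h'
  set h' : A →L[ℂ] ℂ := f.comp (((ContinuousLinearMap.mul ℂ B).flip e).comp (starHomCLM π))
    with hh'
  have hh'app : ∀ x : A, h' x = f (π x * e) := by
    intro x
    simp [hh', ContinuousLinearMap.mul_apply']
  have hpos : ∀ x : A, 0 ≤ h' (star x * x) := by
    intro x
    rw [hh'app]
    rw [show π (star x * x) = star (π x) * π x by rw [map_mul, map_star]]
    have : e = star s * s := by rw [hs_sa.star_eq, hss]
    rw [this]
    refine state_nonneg_conj f hf (π x) s ?_
    rw [← this]
    exact hce x
  have hdom : ∀ x : A, 0 ≤ g (star x * x) - h' (star x * x) := by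
    intro x
    rw [hh'app, ← hπ (star x * x)]
    have h1e : f (π (star x * x)) - f (π (star x * x) * e) = f (π (star x * x) * (1 - e)) := by
      rw [mul_sub, mul_one, map_sub]
    rw [h1e]
    rw [show π (star x * x) = star (π x) * π x by rw [map_mul, map_star]]
    have : (1 : B) - e = star t * t := by rw [ht_sa.star_eq, htt]
    rw [this]
    refine state_nonneg_conj f hf (π x) t ?_
    rw [← this]
    exact (Commute.one_right (π x)).sub_right (hce x)
  have hdm := pure_dominates hg hpos hdom
  have h'1 : h' 1 = f e := by rw [hh'app, map_one, one_mul]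
  -- now unwind
  have hc_e : c = (2 * M : ℝ) • e - algebraMap ℝ B M := by
    rw [he, smul_smul]
    rw [mul_inv_cancel₀ (by positivity : (2 * M : ℝ) ≠ 0), one_smul]
    abel
  have hsmulf : ∀ (r : ℝ) (x : B), f (r • x) = (r : ℂ) * f x := by
    intro r x
    rw [← Complex.real_smul]
    exact f.map_smul_of_tower r x
  have hfc : f c = (2 * M : ℝ) * f e - M := by
    rw [hc_e, map_sub, hsmulf]
    have : f (algebraMap ℝ B M) = (M : ℂ) := by
      rw [Algebra.algebraMap_eq_smul_one, hsmulf, hf.1, mul_one]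
    rw [this]
  have hπac : π a * c = (2 * M : ℝ) • (π a * e) - M • π a := by
    rw [hc_e, mul_sub, Algebra.algebraMap_eq_smul_one]
    simp [mul_smul_comm]
  rw [hπac, map_sub, hsmulf, hsmulf, ← hh'app, hdm, h'1, hπ, hfc]
  ring

end Key







section KeyGen

variable {A B : Type*} [CStarAlgebra A] [CStarAlgebra B]

lemma keyLemma (g : A →L[ℂ] ℂ) (f : B →L[ℂ] ℂ) (hg : IsPureState A g) (hf : IsState B f)
    (π : A →⋆ₐ[ℂ] B) (hπ : ∀ x : A, f (π x) = g x) (c : B)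
    (hc : ∀ x : A, Commute (π x) c) (a : A) : f (π a * c) = f c * g a := by
  have hcstar : ∀ x : A, Commute (π x) (star c) := by
    intro x
    have h1 := (hc (star x)).star_star
    rwa [map_star, star_star] at h1
  set x : B := (2⁻¹ : ℂ) • (c + star c) with hx
  set y : B := (2⁻¹ : ℂ) • (Complex.I • (star c - c)) with hy
  have hst2 : star (2⁻¹ : ℂ) = (2⁻¹ : ℂ) := by
    rw [Complex.star_def, map_inv₀, Complex.conj_ofNat]
  have hxsa : IsSelfAdjoint x := by
    rw [hx, IsSelfAdjoint, star_smul, star_add, star_star, hst2, add_comm]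
  have hysa : IsSelfAdjoint y := by
    rw [hy, IsSelfAdjoint, star_smul, star_smul, star_sub, star_star, hst2,
      show star Complex.I = -Complex.I from Complex.conj_I]
    rw [neg_smul, ← smul_neg, neg_sub]
  have hdecomp : c = x + Complex.I • y := by
    rw [hx, hy, smul_comm (Complex.I) ((2⁻¹ : ℂ)), smul_smul, smul_smul,
      show (2⁻¹ * Complex.I * Complex.I : ℂ) = -2⁻¹ by rw [mul_assoc, Complex.I_mul_I]; ring]
    module
  have hxc : ∀ z : A, Commute (π z) x := fun z =>
    (((hc z).add_right (hcstar z)).smul_right _)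
  have hyc : ∀ z : A, Commute (π z) y := fun z =>
    ((((hcstar z).sub_right (hc z)).smul_right _).smul_right _)
  have h1 := keySelf g f hg hf π hπ x hxsa hxc a
  have h2 := keySelf g f hg hf π hπ y hysa hyc a
  have hsplit : f (π a * (x + Complex.I • y)) = f (π a * x) + Complex.I * f (π a * y) := by
    simp only [mul_add, map_add, mul_smul_comm, map_smul, smul_eq_mul]
  have hfc : f c = f x + Complex.I * f y := by
    conv_lhs => rw [hdecomp]
    simp only [map_add, map_smul, smul_eq_mul]
  conv_lhs => rw [hdecomp]
  rw [hsplit, h1, h2, hfc]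
  ring

end KeyGen

/-- **Product factorization for commuting certified copies of a pure state**
(core of Proposition 3.5, forward direction).  If `g` is a pure state on `A`, `f` a state on
`B`, and `π_1, …, π_n : A → B` are injective unital star-homomorphisms with pairwise commuting
images such that `f ∘ π_i = g`, then
`f (π_1 a_1 ⋯ π_n a_n) = g a_1 ⋯ g a_n`. -/
theorem state_product_factorization {A B : Type*} [CStarAlgebra A] [CStarAlgebra B]
    (g : A →L[ℂ] ℂ) (f : B →L[ℂ] ℂ)
    (hg : IsPureState A g) (hf : IsState B f)
    (n : ℕ) (π : Fin n → (A →⋆ₐ[ℂ] B))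
    (hinj : ∀ i, Function.Injective (π i))
    (hcomm : ∀ i j, i ≠ j → ∀ x y : A, Commute (π i x) (π j y))
    (hstate : ∀ i (a : A), f (π i a) = g a)
    (a : Fin n → A) :
    f (List.ofFn fun i => π i (a i)).prod = ∏ i, g (a i) := by
  induction n with
  | zero => simp [hf.1]
  | succ m ih =>
    rw [List.ofFn_succ, List.prod_cons, Fin.prod_univ_succ]
    set c : B := (List.ofFn fun i : Fin m => π i.succ (a i.succ)).prod with hcdef
    have hc : ∀ x : A, Commute (π 0 x) c := by
      intro x
      apply Commute.list_prod_right
      intro z hz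
      rw [List.mem_ofFn] at hz
      obtain ⟨i, rfl⟩ := hz
      exact hcomm 0 i.succ (Fin.succ_ne_zero i).symm x _
    have h1 := keyLemma g f hg hf (π 0) (hstate 0) c hc (a 0)
    rw [h1]
    have h2 : f c = ∏ i : Fin m, g (a i.succ) := by
      rw [hcdef]
      exact ih (fun i => π i.succ) (fun i => hinj i.succ)
        (fun i j hij x y => hcomm i.succ j.succ (fun hh => hij (Fin.succ_injective m hh)) x y)
        (fun i => hstate i.succ) (fun i => a i.succ)
    rw [h2]
    ring
end
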